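/- The function π^(2) with density d π^(2)(x) = (2^{1/3}√3 /(12π)) · [2^{1/3}(27 + 3√(81−12x))^{2/3} − 6 x^{1/3}] / [x^{2/3}(27 + 3√(81−12x))^{1/3}] on the interval (0, 27/4] is a probability density whose p-th moment is the Fuss-Catalan number FC^(2)_p = (1/(2p+1)) binomial(3p, p). -/

import Mathlib

open MeasureTheory

/-- The density of the Fuss–Catalan distribution `π⁽²⁾` on `(0, 27/4]`. -/
noncomputable def fc2Density (x : ℝ) : ℝ :=
  ((2 : ℝ) ^ ((1 : ℝ) / 3) * Real.sqrt 3 / (12 * Real.pi)) *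
    (((2 : ℝ) ^ ((1 : ℝ) / 3) * (27 + 3 * Real.sqrt (81 - 12 * x)) ^ ((2 : ℝ) / 3)
        - 6 * x ^ ((1 : ℝ) / 3)) /
      (x ^ ((2 : ℝ) / 3) * (27 + 3 * Real.sqrt (81 - 12 * x)) ^ ((1 : ℝ) / 3)))

open Set

section img

lemma fc2_img : (fun t : ℝ => 27*t*(1-t)) '' Ioo (1/2) 1 = Ioo 0 (27/4) := by
  apply Subset.antisymm
  · rintro y ⟨t, ⟨h1, h2⟩, rfl⟩
    simp only
    constructor
    · nlinarith
    · nlinarith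
  · intro y hy
    have hc : ContinuousOn (fun t : ℝ => 27*t*(1-t)) (Icc (1/2) 1) := by fun_prop
    have := intermediate_value_Ioo' (by norm_num : (1/2:ℝ) ≤ 1) hc
    apply this
    norm_num
    exact hy

lemma fc2_deriv (t : ℝ) : HasDerivAt (fun t : ℝ => 27*t*(1-t)) (27 - 54*t) t := by
  have h := ((hasDerivAt_id t).const_mul 27).mul ((hasDerivAt_const t (1:ℝ)).sub (hasDerivAt_id t))
  refine h.congr_deriv ?_
  simp
  ring

lemma fc2_inj : InjOn (fun t : ℝ => 27*t*(1-t)) (Ioo (1/2) 1) := by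
  rintro a ⟨ha1, _⟩ b ⟨hb1, _⟩ h
  simp only at h
  have h0 : (a - b) * (1 - a - b) = 0 := by linear_combination h/27
  rcases mul_eq_zero.1 h0 with h' | h'
  · linarith [sub_eq_zero.1 h']
  · linarith

end img

noncomputable def fcQ (p : ℕ) (t : ℝ) : ℝ :=
  (2*t-1) * (t ^ ((p:ℝ)-1/3) * (1-t) ^ ((p:ℝ)-2/3) - t ^ ((p:ℝ)-2/3) * (1-t) ^ ((p:ℝ)-1/3))

noncomputable def fcF (p : ℕ) (t : ℝ) : ℝ :=
  (2*(t ^ ((p:ℝ)+2/3) * (1-t) ^ ((p:ℝ)-2/3)) - t ^ ((p:ℝ)-1/3) * (1-t) ^ ((p:ℝ)-2/3))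
  - (2*(t ^ ((p:ℝ)+1/3) * (1-t) ^ ((p:ℝ)-1/3)) - t ^ ((p:ℝ)-2/3) * (1-t) ^ ((p:ℝ)-1/3))

lemma fcQ_symm (p : ℕ) (t : ℝ) : fcQ p (1-t) = fcQ p t := by
  unfold fcQ
  rw [sub_sub_cancel]
  ring

lemma nat_add_frac_ne (p : ℕ) {r : ℝ} (h0 : r ≠ 0) (h1 : -1 < r) : (p:ℝ) + r ≠ 0 := by
  rcases Nat.eq_zero_or_pos p with h | h
  · subst h; simpa using h0
  · have : (1:ℝ) ≤ p := Nat.one_le_cast.2 h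
    intro hc; linarith

lemma fcQ_eq_fcF (p : ℕ) {t : ℝ} (ht : t ∈ Icc (0:ℝ) 1) : fcQ p t = fcF p t := by
  have e1 : ((p:ℝ) - 1/3) ≠ 0 := by
    simpa [sub_eq_add_neg] using nat_add_frac_ne p (r := -(1/3)) (by norm_num) (by norm_num)
  have e2 : ((p:ℝ) - 2/3) ≠ 0 := by
    simpa [sub_eq_add_neg] using nat_add_frac_ne p (r := -(2/3)) (by norm_num) (by norm_num)
  have e3 : ((p:ℝ) + 1/3) ≠ 0 := nat_add_frac_ne p (by norm_num) (by norm_num)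
  have e4 : ((p:ℝ) + 2/3) ≠ 0 := nat_add_frac_ne p (by norm_num) (by norm_num)
  rcases eq_or_lt_of_le ht.1 with h0 | h0
  · subst h0
    simp only [fcQ, fcF, sub_zero, Real.one_rpow, Real.zero_rpow e1, Real.zero_rpow e2,
      Real.zero_rpow e3, Real.zero_rpow e4]
    ring
  rcases eq_or_lt_of_le ht.2 with h1 | h1
  · subst h1
    simp only [fcQ, fcF, sub_self, Real.one_rpow, Real.zero_rpow e1, Real.zero_rpow e2]
    ring
  have ht1 : 0 < 1 - t := by linarith
  unfold fcQ fcF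
  rw [show (p:ℝ) + 2/3 = 1 + ((p:ℝ) - 1/3) by ring, show (p:ℝ) + 1/3 = 1 + ((p:ℝ) - 2/3) by ring,
    Real.rpow_add h0, Real.rpow_add h0, Real.rpow_one]
  ring

lemma rbeta_integrable_left {a b : ℝ} (ha : -1 < a) :
    IntervalIntegrable (fun t : ℝ => t ^ a * (1 - t) ^ b) volume 0 (1/2) := by
  apply IntervalIntegrable.mul_continuousOn
  · exact intervalIntegral.intervalIntegrable_rpow' ha
  · apply ContinuousOn.rpow_const
    · exact (continuous_const.sub continuous_id).continuousOn
    · intro x hx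
      rw [Set.uIcc_of_le (by norm_num : (0:ℝ) ≤ 1/2)] at hx
      left; intro h; linarith [hx.2, h]

lemma rbeta_integrable {a b : ℝ} (ha : -1 < a) (hb : -1 < b) :
    IntervalIntegrable (fun t : ℝ => t ^ a * (1 - t) ^ b) volume 0 1 := by
  apply IntervalIntegrable.trans (b := 1/2)
  · exact rbeta_integrable_left ha
  · have h := (rbeta_integrable_left (a := b) (b := a) hb).comp_sub_left 1
    norm_num at h
    apply h.symm.congr
    intro x _
    ring_nf

lemma exp_bound1 (p : ℕ) : (-1 : ℝ) < (p:ℝ) - 2/3 := by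
  have : (0:ℝ) ≤ p := Nat.cast_nonneg p
  linarith

lemma exp_bound2 (p : ℕ) : (-1 : ℝ) < (p:ℝ) - 1/3 := by
  have : (0:ℝ) ≤ p := Nat.cast_nonneg p
  linarith

lemma exp_bound3 (p : ℕ) : (-1 : ℝ) < (p:ℝ) + 1/3 := by
  have : (0:ℝ) ≤ p := Nat.cast_nonneg p
  linarith

lemma exp_bound4 (p : ℕ) : (-1 : ℝ) < (p:ℝ) + 2/3 := by
  have : (0:ℝ) ≤ p := Nat.cast_nonneg p
  linarith

lemma fcF_int (p : ℕ) : IntervalIntegrable (fcF p) volume 0 1 := by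
  unfold fcF
  exact (((rbeta_integrable (exp_bound4 p) (exp_bound1 p)).const_mul 2).sub
    (rbeta_integrable (exp_bound2 p) (exp_bound1 p))).sub
    (((rbeta_integrable (exp_bound3 p) (exp_bound2 p)).const_mul 2).sub
    (rbeta_integrable (exp_bound1 p) (exp_bound2 p)))

lemma fcQ_int (p : ℕ) : IntervalIntegrable (fcQ p) volume 0 1 := by
  rw [intervalIntegrable_iff_integrableOn_Ioc_of_le (by norm_num)]
  have h := (intervalIntegrable_iff_integrableOn_Ioc_of_le (by norm_num : (0:ℝ) ≤ 1)).1 (fcF_int p)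
  apply h.congr_fun _ measurableSet_Ioc
  intro x hx
  exact (fcQ_eq_fcF p ⟨hx.1.le, hx.2⟩).symm

lemma rbeta_complex {a b : ℝ} :
    Complex.betaIntegral (a+1) (b+1) = ((∫ t in (0:ℝ)..1, t ^ a * (1 - t) ^ b : ℝ) : ℂ) := by
  rw [Complex.betaIntegral, ← intervalIntegral.integral_ofReal]
  apply intervalIntegral.integral_congr_ae
  have h1 : ∀ᵐ (x : ℝ), x ≠ 1 := by
    rw [ae_iff]
    have : {x : ℝ | ¬ x ≠ 1} = {1} := by ext y; simp
    rw [this]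
    exact measure_singleton 1
  filter_upwards [h1] with x hx hmem
  rw [Set.uIoc_of_le (by norm_num : (0:ℝ) ≤ 1)] at hmem
  have hx0 : (0:ℝ) ≤ x := le_of_lt hmem.1
  have hx1 : (0:ℝ) ≤ 1 - x := by
    rcases lt_or_eq_of_le hmem.2 with h | h
    · linarith
    · exact absurd h hx
  simp only [add_sub_cancel_right]
  rw [Complex.ofReal_mul, Complex.ofReal_cpow hx0, Complex.ofReal_cpow hx1]
  push_cast
  ring

lemma rbeta_eq {a b : ℝ} (ha : -1 < a) (hb : -1 < b) :
    ∫ t in (0:ℝ)..1, t ^ a * (1 - t) ^ b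
      = Real.Gamma (a+1) * Real.Gamma (b+1) / Real.Gamma (a+b+2) := by
  have h1 : (0:ℝ) < a + 1 := by linarith
  have h2 : (0:ℝ) < b + 1 := by linarith
  have h3 : (0:ℝ) < a + b + 2 := by linarith
  have hG : Real.Gamma (a+b+2) ≠ 0 := (Real.Gamma_pos_of_pos h3).ne'
  have key := Complex.Gamma_mul_Gamma_eq_betaIntegral
    (s := (a:ℂ)+1) (t := (b:ℂ)+1) (by simpa using h1) (by simpa using h2)
  rw [rbeta_complex] at key
  have hsum : ((a:ℂ)+1) + ((b:ℂ)+1) = ((a+b+2 : ℝ) : ℂ) := by push_cast; ring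
  rw [hsum] at key
  have hA : ((a:ℂ)+1) = ((a+1 : ℝ) : ℂ) := by push_cast; ring
  have hB : ((b:ℂ)+1) = ((b+1 : ℝ) : ℂ) := by push_cast; ring
  rw [hA, hB, Complex.Gamma_ofReal, Complex.Gamma_ofReal, Complex.Gamma_ofReal] at key
  have := congrArg Complex.re key
  rw [← Complex.ofReal_mul, ← Complex.ofReal_mul] at key
  have keyr : Real.Gamma (a+1) * Real.Gamma (b+1)
      = Real.Gamma (a+b+2) * ∫ t in (0:ℝ)..1, t ^ a * (1 - t) ^ b :=
    Complex.ofReal_inj.1 key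
  field_simp
  linarith [keyr]

lemma gamma_base : Real.Gamma (1/3) * Real.Gamma (2/3) = 2 * Real.pi / Real.sqrt 3 := by
  have h := Real.Gamma_mul_Gamma_one_sub (1/3)
  norm_num at h
  rw [show Real.pi * (1/3) = Real.pi / 3 by ring, Real.sin_pi_div_three] at h
  rw [h, div_div_eq_mul_div]
  ring

lemma gamma_key (p : ℕ) :
    27 ^ p * Real.Gamma (p + 1/3) * Real.Gamma (p + 2/3) * (p.factorial : ℝ)
      = 2 * Real.pi / Real.sqrt 3 * ((3*p).factorial : ℝ) := by
  induction p with
  | zero => simpa using gamma_base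
  | succ n ih =>
      have h13 : ((n:ℝ) + 1/3) ≠ 0 := by positivity
      have h23 : ((n:ℝ) + 2/3) ≠ 0 := by positivity
      have e1 : (((n+1 : ℕ) : ℝ) + 1/3) = ((n:ℝ) + 1/3) + 1 := by push_cast; ring
      have e2 : (((n+1 : ℕ) : ℝ) + 2/3) = ((n:ℝ) + 2/3) + 1 := by push_cast; ring
      rw [e1, e2, Real.Gamma_add_one h13, Real.Gamma_add_one h23]
      have e3 : 3 * (n+1) = 3*n+1+1+1 := by ring
      rw [e3, Nat.factorial_succ, Nat.factorial_succ, Nat.factorial_succ, Nat.factorial_succ]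
      push_cast
      linear_combination (27*((n:ℝ)+1/3)*((n:ℝ)+2/3)*((n:ℝ)+1)) * ih

lemma rpow13_cube {x c : ℝ} (hc : 0 ≤ c) (h : c^3 = x) : x ^ ((1:ℝ)/3) = c := by
  rw [← h, ← Real.rpow_natCast c 3, ← Real.rpow_mul hc]
  norm_num

lemma rpow23_sq {x : ℝ} (hx : 0 ≤ x) : x ^ ((2:ℝ)/3) = (x ^ ((1:ℝ)/3))^2 := by
  rw [← Real.rpow_natCast (x ^ ((1:ℝ)/3)) 2, ← Real.rpow_mul hx]
  norm_num

lemma density_eval {t : ℝ} (h1 : 1/2 < t) (h2 : t < 1) :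
    fc2Density (27*t*(1-t)) = Real.sqrt 3 / (18*Real.pi) *
      ((t ^ ((1:ℝ)/3) - (1-t) ^ ((1:ℝ)/3)) / (t ^ ((2:ℝ)/3) * (1-t) ^ ((2:ℝ)/3))) := by
  have ht : (0:ℝ) < t := by linarith
  have ht1 : (0:ℝ) < 1 - t := by linarith
  set A := t ^ ((1:ℝ)/3) with hA
  set B := (1-t) ^ ((1:ℝ)/3) with hB
  have hApos : 0 < A := Real.rpow_pos_of_pos ht _
  have hBpos : 0 < B := Real.rpow_pos_of_pos ht1 _
  have hA3 : A^3 = t := by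
    rw [hA, ← Real.rpow_natCast (t ^ ((1:ℝ)/3)) 3, ← Real.rpow_mul ht.le]; norm_num
  have hB3 : B^3 = 1 - t := by
    rw [hB, ← Real.rpow_natCast ((1-t) ^ ((1:ℝ)/3)) 3, ← Real.rpow_mul ht1.le]; norm_num
  -- the square root
  have hsq : Real.sqrt (81 - 12 * (27*t*(1-t))) = 9*(2*t-1) := by
    rw [show 81 - 12 * (27*t*(1-t)) = (9*(2*t-1))^2 by ring]
    exact Real.sqrt_sq (by linarith)
  have h54 : 27 + 3 * (9*(2*t-1)) = 54 * t := by ring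
  rw [fc2Density, hsq, h54]
  -- powers of x = 27 t (1-t)
  have hx13 : (27*t*(1-t)) ^ ((1:ℝ)/3) = 3*A*B := by
    apply rpow13_cube (by positivity)
    rw [mul_pow, mul_pow, hA3, hB3]; ring
  have hx23 : (27*t*(1-t)) ^ ((2:ℝ)/3) = 9*A^2*B^2 := by
    rw [rpow23_sq (by nlinarith), hx13]; ring
  -- 2^(1/3) * (54 t)^(2/3) = 18 A^2
  have hkey : (2:ℝ) ^ ((1:ℝ)/3) * (54*t) ^ ((2:ℝ)/3) = 18 * A^2 := by
    rw [rpow23_sq (by positivity)]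
    have h1 : (54*t) ^ ((1:ℝ)/3) = 3 * ((2:ℝ) ^ ((1:ℝ)/3) * A) := by
      apply rpow13_cube (by positivity)
      have : ((2:ℝ) ^ ((1:ℝ)/3))^3 = 2 := by
        rw [← Real.rpow_natCast ((2:ℝ) ^ ((1:ℝ)/3)) 3, ← Real.rpow_mul (by norm_num)]
        norm_num
      rw [mul_pow, mul_pow, this, hA3]; ring
    rw [h1]
    have h2 : ((2:ℝ) ^ ((1:ℝ)/3))^3 = 2 := by
      rw [← Real.rpow_natCast ((2:ℝ) ^ ((1:ℝ)/3)) 3, ← Real.rpow_mul (by norm_num)]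
      norm_num
    nlinarith [h2, Real.rpow_pos_of_pos (show (0:ℝ) < 2 by norm_num) ((1:ℝ)/3)]
  -- (54 t)^(1/3) = 3 * 2^(1/3) * A
  have h54t : (54*t) ^ ((1:ℝ)/3) = 3 * ((2:ℝ) ^ ((1:ℝ)/3) * A) := by
    apply rpow13_cube (by positivity)
    have : ((2:ℝ) ^ ((1:ℝ)/3))^3 = 2 := by
      rw [← Real.rpow_natCast ((2:ℝ) ^ ((1:ℝ)/3)) 3, ← Real.rpow_mul (by norm_num)]
      norm_num
    rw [mul_pow, mul_pow, this, hA3]; ring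
  rw [hkey, hx13, hx23, h54t, rpow23_sq ht.le, rpow23_sq ht1.le, ← hA, ← hB]
  have hu : (0:ℝ) < (2:ℝ) ^ ((1:ℝ)/3) := Real.rpow_pos_of_pos (by norm_num) _
  have hpi : Real.pi ≠ 0 := Real.pi_ne_zero
  field_simp
  ring

lemma fc2_moment (p : ℕ) :
    (∫ x in Set.Ioc (0:ℝ) (27/4), x ^ p * fc2Density x)
      = ((3*p).factorial : ℝ) / ((p.factorial : ℝ) * ((2*p+1).factorial : ℝ)) := by
  have hderiv : ∀ t ∈ Ioo (1/2:ℝ) 1, HasDerivWithinAt (fun t : ℝ => 27*t*(1-t))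
      ((fun t : ℝ => 27 - 54*t) t) (Ioo (1/2:ℝ) 1) t :=
    fun t _ => (fc2_deriv t).hasDerivWithinAt
  rw [integral_Ioc_eq_integral_Ioo, ← fc2_img,
    integral_image_eq_integral_abs_deriv_smul measurableSet_Ioo hderiv fc2_inj]
  -- pointwise identification with the clean integrand
  have hcong : ∀ t ∈ Ioo (1/2:ℝ) 1,
      (fun t => |(fun t : ℝ => 27 - 54*t) t| • ((27*t*(1-t)) ^ p * fc2Density (27*t*(1-t)))) t
        = (27:ℝ)^(p+1) * Real.sqrt 3 / (18*Real.pi) * fcQ p t := by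
    intro t ht
    obtain ⟨ht1, ht2⟩ := ht
    have ht0 : (0:ℝ) < t := by linarith
    have htt : (0:ℝ) < 1 - t := by linarith
    have hA : (0:ℝ) < t ^ ((1:ℝ)/3) := Real.rpow_pos_of_pos ht0 _
    have hB : (0:ℝ) < (1-t) ^ ((1:ℝ)/3) := Real.rpow_pos_of_pos htt _
    simp only [smul_eq_mul]
    rw [density_eval ht1 ht2, abs_of_nonpos (by linarith)]
    unfold fcQ
    rw [Real.rpow_sub ht0, Real.rpow_sub ht0, Real.rpow_sub htt, Real.rpow_sub htt,
      Real.rpow_natCast, Real.rpow_natCast, mul_pow, mul_pow,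
      rpow23_sq ht0.le, rpow23_sq htt.le]
    have hpi : Real.pi ≠ 0 := Real.pi_ne_zero
    field_simp
    ring
  rw [setIntegral_congr_fun measurableSet_Ioo hcong, integral_const_mul]
  -- pass to interval integral and use symmetry
  have hIoo : ∫ t in Ioo (1/2:ℝ) 1, fcQ p t = ∫ t in (1/2:ℝ)..1, fcQ p t := by
    rw [intervalIntegral.integral_of_le (by norm_num : (1/2:ℝ) ≤ 1),
      integral_Ioc_eq_integral_Ioo]
  have hmono1 : IntervalIntegrable (fcQ p) volume 0 (1/2) :=
    (fcQ_int p).mono_set (by rw [Set.uIcc_of_le (by norm_num : (0:ℝ) ≤ 1/2),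
      Set.uIcc_of_le (by norm_num : (0:ℝ) ≤ 1)]; exact Set.Icc_subset_Icc_right (by norm_num))
  have hmono2 : IntervalIntegrable (fcQ p) volume (1/2) 1 :=
    (fcQ_int p).mono_set (by rw [Set.uIcc_of_le (by norm_num : (1/2:ℝ) ≤ 1),
      Set.uIcc_of_le (by norm_num : (0:ℝ) ≤ 1)]; exact Set.Icc_subset_Icc_left (by norm_num))
  have hhalf : ∫ t in (0:ℝ)..(1/2), fcQ p t = ∫ t in (1/2:ℝ)..1, fcQ p t := by
    have h1 : ∫ t in (0:ℝ)..(1/2), fcQ p t = ∫ t in (0:ℝ)..(1/2), fcQ p (1-t) := by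
      apply intervalIntegral.integral_congr
      intro x _
      exact (fcQ_symm p x).symm
    rw [h1, intervalIntegral.integral_comp_sub_left (fcQ p) 1]
    norm_num
  have hsplit : ∫ t in (0:ℝ)..1, fcQ p t
      = (∫ t in (0:ℝ)..(1/2), fcQ p t) + ∫ t in (1/2:ℝ)..1, fcQ p t :=
    (intervalIntegral.integral_add_adjacent_intervals hmono1 hmono2).symm
  have hQint : ∫ t in (1/2:ℝ)..1, fcQ p t = (1/2) * ∫ t in (0:ℝ)..1, fcQ p t := by
    rw [hsplit, hhalf]; ring
  -- evaluate ∫₀¹ fcQ via Beta integrals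
  have hQF : ∫ t in (0:ℝ)..1, fcQ p t = ∫ t in (0:ℝ)..1, fcF p t := by
    apply intervalIntegral.integral_congr
    intro x hx
    rw [Set.uIcc_of_le (by norm_num : (0:ℝ) ≤ 1)] at hx
    exact fcQ_eq_fcF p hx
  have hFval : ∫ t in (0:ℝ)..1, fcF p t
      = (2*(Real.Gamma ((p:ℝ)+5/3) * Real.Gamma ((p:ℝ)+1/3) / Real.Gamma (2*(p:ℝ)+2))
          - Real.Gamma ((p:ℝ)+2/3) * Real.Gamma ((p:ℝ)+1/3) / Real.Gamma (2*(p:ℝ)+1))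
        - (2*(Real.Gamma ((p:ℝ)+4/3) * Real.Gamma ((p:ℝ)+2/3) / Real.Gamma (2*(p:ℝ)+2))
          - Real.Gamma ((p:ℝ)+1/3) * Real.Gamma ((p:ℝ)+2/3) / Real.Gamma (2*(p:ℝ)+1)) := by
    unfold fcF
    rw [intervalIntegral.integral_sub
        (((rbeta_integrable (exp_bound4 p) (exp_bound1 p)).const_mul 2).sub
          (rbeta_integrable (exp_bound2 p) (exp_bound1 p)))
        (((rbeta_integrable (exp_bound3 p) (exp_bound2 p)).const_mul 2).sub
          (rbeta_integrable (exp_bound1 p) (exp_bound2 p))),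
      intervalIntegral.integral_sub
        ((rbeta_integrable (exp_bound4 p) (exp_bound1 p)).const_mul 2)
        (rbeta_integrable (exp_bound2 p) (exp_bound1 p)),
      intervalIntegral.integral_sub
        ((rbeta_integrable (exp_bound3 p) (exp_bound2 p)).const_mul 2)
        (rbeta_integrable (exp_bound1 p) (exp_bound2 p)),
      intervalIntegral.integral_const_mul, intervalIntegral.integral_const_mul,
      rbeta_eq (exp_bound4 p) (exp_bound1 p), rbeta_eq (exp_bound2 p) (exp_bound1 p),
      rbeta_eq (exp_bound3 p) (exp_bound2 p), rbeta_eq (exp_bound1 p) (exp_bound2 p)]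
    rw [show (p:ℝ)+2/3+1 = (p:ℝ)+5/3 by ring, show (p:ℝ)-2/3+1 = (p:ℝ)+1/3 by ring,
      show (p:ℝ)+2/3+((p:ℝ)-2/3)+2 = 2*(p:ℝ)+2 by ring,
      show (p:ℝ)-1/3+1 = (p:ℝ)+2/3 by ring,
      show (p:ℝ)-1/3+((p:ℝ)-2/3)+2 = 2*(p:ℝ)+1 by ring,
      show (p:ℝ)+1/3+1 = (p:ℝ)+4/3 by ring,
      show (p:ℝ)+1/3+((p:ℝ)-1/3)+2 = 2*(p:ℝ)+2 by ring,
      show (p:ℝ)-2/3+((p:ℝ)-1/3)+2 = 2*(p:ℝ)+1 by ring]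
  -- Gamma algebra
  have hG1 : Real.Gamma ((p:ℝ)+5/3) = ((p:ℝ)+2/3) * Real.Gamma ((p:ℝ)+2/3) := by
    rw [show (p:ℝ)+5/3 = ((p:ℝ)+2/3)+1 by ring, Real.Gamma_add_one (by positivity)]
  have hG2 : Real.Gamma ((p:ℝ)+4/3) = ((p:ℝ)+1/3) * Real.Gamma ((p:ℝ)+1/3) := by
    rw [show (p:ℝ)+4/3 = ((p:ℝ)+1/3)+1 by ring, Real.Gamma_add_one (by positivity)]
  have hG3 : Real.Gamma (2*(p:ℝ)+2) = ((2*p+1).factorial : ℝ) := by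
    rw [show 2*(p:ℝ)+2 = ((2*p+1 : ℕ) : ℝ)+1 by push_cast; ring, Real.Gamma_nat_eq_factorial]
  have hG4 : Real.Gamma (2*(p:ℝ)+1) = ((2*p).factorial : ℝ) := by
    rw [show 2*(p:ℝ)+1 = ((2*p : ℕ) : ℝ)+1 by push_cast; ring, Real.Gamma_nat_eq_factorial]
  rw [hIoo, hQint, hQF, hFval, hG1, hG2, hG3, hG4]
  have hkey := gamma_key p
  have hfac : ((2*p+1).factorial : ℝ) = (2*(p:ℝ)+1) * ((2*p).factorial : ℝ) := by
    rw [show 2*p+1 = (2*p)+1 from rfl, Nat.factorial_succ]; push_cast; ring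
  have hfacpos : (0:ℝ) < ((2*p).factorial : ℝ) := by positivity
  have hfppos : (0:ℝ) < ((p).factorial : ℝ) := by positivity
  have hs3 : Real.sqrt 3 * Real.sqrt 3 = 3 := Real.mul_self_sqrt (by norm_num)
  have hs3pos : (0:ℝ) < Real.sqrt 3 := Real.sqrt_pos.2 (by norm_num)
  have hpi : (0:ℝ) < Real.pi := Real.pi_pos
  set G1 := Real.Gamma ((p:ℝ)+1/3) with hG1d
  set G2 := Real.Gamma ((p:ℝ)+2/3) with hG2d
  have hkey2 : 27^p * G1 * G2 * (p.factorial:ℝ) * Real.sqrt 3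
      = 2*Real.pi*((3*p).factorial:ℝ) := by
    rw [div_mul_eq_mul_div, eq_div_iff hs3pos.ne'] at hkey
    linarith [hkey]
  rw [hfac]
  field_simp
  linear_combination (54:ℝ) * hkey2

lemma fc2Density_nonneg {x : ℝ} (hx : x ∈ Set.Ioc (0:ℝ) (27/4)) : 0 ≤ fc2Density x := by
  obtain ⟨hx0, hx1⟩ := hx
  have hs : 0 ≤ Real.sqrt (81 - 12*x) := Real.sqrt_nonneg _
  have hs2 : Real.sqrt (81 - 12*x) ^ 2 = 81 - 12*x := Real.sq_sqrt (by linarith)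
  set s := Real.sqrt (81 - 12*x) with hsdef
  have hbase : (0:ℝ) ≤ 27 + 3*s := by linarith
  apply mul_nonneg (by positivity)
  apply div_nonneg
  · rw [sub_nonneg]
    have hXc : ((27 + 3*s) ^ ((1:ℝ)/3))^3 = 27 + 3*s := by
      rw [← Real.rpow_natCast ((27+3*s) ^ ((1:ℝ)/3)) 3, ← Real.rpow_mul hbase]; norm_num
    have hxc : (x ^ ((1:ℝ)/3))^3 = x := by
      rw [← Real.rpow_natCast (x ^ ((1:ℝ)/3)) 3, ← Real.rpow_mul hx0.le]; norm_num
    have h2c : (((2:ℝ) ^ ((1:ℝ)/3)))^3 = 2 := by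
      rw [← Real.rpow_natCast ((2:ℝ) ^ ((1:ℝ)/3)) 3, ← Real.rpow_mul (by norm_num)]; norm_num
    have c1 : (6 * x ^ ((1:ℝ)/3))^3 = 216 * x := by
      rw [mul_pow, hxc]; norm_num
    have c2 : ((2:ℝ) ^ ((1:ℝ)/3) * (27 + 3*s) ^ ((2:ℝ)/3))^3 = 2*(27 + 3*s)^2 := by
      rw [mul_pow, h2c, rpow23_sq hbase, ← pow_mul, show 2*3 = 3*2 from rfl, pow_mul, hXc]
    have hle : (6 * x ^ ((1:ℝ)/3))^3 ≤ ((2:ℝ) ^ ((1:ℝ)/3) * (27 + 3*s) ^ ((2:ℝ)/3))^3 := by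
      rw [c1, c2]; nlinarith
    exact le_of_pow_le_pow_left₀ (by norm_num) (by positivity) hle
  · positivity

/-- `fc2Density` is a probability density on `(0, 27/4]` whose `p`-th moment is the
Fuss–Catalan number `FC⁽²⁾_p = (1/(2p+1)) * choose (3p) p`. -/
theorem fc2Density_is_fussCatalan :
    (∀ x ∈ Set.Ioc (0 : ℝ) (27 / 4), 0 ≤ fc2Density x) ∧
    (∫ x in Set.Ioc (0 : ℝ) (27 / 4), fc2Density x) = 1 ∧
    ∀ p : ℕ, 0 < p → (∫ x in Set.Ioc (0 : ℝ) (27 / 4), x ^ p * fc2Density x)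
      = (Nat.choose (3 * p) p : ℝ) / (2 * (p : ℝ) + 1) := by
  refine ⟨fun x hx => fc2Density_nonneg hx, ?_, ?_⟩
  · have h := fc2_moment 0
    simp only [pow_zero, one_mul] at h
    rw [h]
    norm_num
  · intro p _
    rw [fc2_moment p]
    have hch := Nat.choose_mul_factorial_mul_factorial (show p ≤ 3*p by omega)
    rw [show 3*p - p = 2*p by omega] at hch
    have hc : ((3*p).choose p : ℝ) * (p.factorial:ℝ) * ((2*p).factorial:ℝ)
        = ((3*p).factorial:ℝ) := by exact_mod_cast congrArg (Nat.cast (R := ℝ)) hch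
    have hfac : ((2*p+1).factorial : ℝ) = (2*(p:ℝ)+1) * ((2*p).factorial : ℝ) := by
      rw [Nat.factorial_succ]; push_cast; ring
    have h1 : (0:ℝ) < (p.factorial:ℝ) := by positivity
    have h2 : (0:ℝ) < ((2*p).factorial:ℝ) := by positivity
    have h3 : (0:ℝ) < 2*(p:ℝ)+1 := by positivity
    rw [hfac]
    field_simp
    linear_combination (-1:ℝ) * hc
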